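/- Let Q₁ := convexHull{0, ½w, −½v, m₁}. Then for every x ∈ Q₁: θ[0,0](x) = 0, θ[0,1](x) = [x, v] + ¼[v, v], and θ[1,1](x) = −[x, w] + ¼[w, w]. -/
import Mathlib


/-!
STATEMENT 18: For the hexagonal Voronoi cell of `𝖯 = ℤu + ℤv` (strictly obtuse superbasis
`u, v, w = −u−v`) and `Q₁ := convexHull{0, ½w, −½v, m₁}`, every `x ∈ Q₁` satisfies
`θ[0,0](x) = 0`, `θ[0,1](x) = [x, v] + ¼[v, v]`, and `θ[1,1](x) = −[x, w] + ¼[w, w]`.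
-/

noncomputable section

/-- The standard inner product on `ℝ × ℝ`. -/
def ip (x y : ℝ × ℝ) : ℝ := x.1 * y.1 + x.2 * y.2

/-- The lattice `ℤu + ℤv` as a subset of `ℝ × ℝ`. -/
def lat (u v : ℝ × ℝ) : Set (ℝ × ℝ) :=
  {p | ∃ m n : ℤ, p = (m : ℝ) • u + (n : ℝ) • v}

/-- The second-order tropical theta function `θ[j₁,j₂]` of the lattice `ℤu + ℤv`. -/
def theta (u v : ℝ × ℝ) (j₁ j₂ : ℝ) (x : ℝ × ℝ) : ℝ :=
  sInf {t : ℝ | ∃ p ∈ lat u v,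
      t = ip (x + p + (j₁ / 2) • u + (j₂ / 2) • v) (x + p + (j₁ / 2) • u + (j₂ / 2) • v)}
    - ip x x

lemma abs_int_le_sq (k : ℤ) : |(k:ℝ)| ≤ (k:ℝ)^2 := by
  rcases eq_or_ne k 0 with rfl | hk
  · simp
  · have h1 : (1:ℝ) ≤ |(k:ℝ)| := by
      rw [← Int.cast_abs]
      exact_mod_cast Int.one_le_abs hk
    nlinarith [abs_nonneg (k:ℝ), sq_abs (k:ℝ)]

lemma term_bound (k : ℤ) (X C : ℝ) (hC : 0 ≤ C) (hX : |X| ≤ C) :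
    -(C * (k:ℝ)^2) ≤ (k:ℝ) * X := by
  have h1 : -((k:ℝ) * X) ≤ |(k:ℝ)| * |X| := by rw [← abs_mul]; exact neg_le_abs _
  have h2 : |(k:ℝ)| * |X| ≤ |(k:ℝ)| * C := mul_le_mul_of_nonneg_left hX (abs_nonneg _)
  have h3 : |(k:ℝ)| * C ≤ (k:ℝ)^2 * C := mul_le_mul_of_nonneg_right (abs_int_le_sq k) hC
  linarith

lemma voronoi_key (P Q R D E : ℝ) (hP : 0 < P) (hQ : 0 < Q) (hR : 0 < R)
    (hD : |2*D| ≤ P + Q) (hE : |2*E| ≤ P + R) (hDE : |2*(D+E)| ≤ Q + R)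
    (m n : ℤ) :
    0 ≤ P*((m:ℝ)-(n:ℝ))^2 + Q*(m:ℝ)^2 + R*(n:ℝ)^2 + 2*(m:ℝ)*D + 2*(n:ℝ)*E := by
  obtain ⟨hD1, hD2⟩ := abs_le.mp hD
  obtain ⟨hE1, hE2⟩ := abs_le.mp hE
  obtain ⟨hF1, hF2⟩ := abs_le.mp hDE
  set Y : ℝ := max (2*D - P) (max (-Q) (2*(D+E) - R)) with hY
  have hYl1 : 2*D - P ≤ Y := le_max_left _ _
  have hYl2 : -Q ≤ Y := le_trans (le_max_left _ _) (le_max_right _ _)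
  have hYl3 : 2*(D+E) - R ≤ Y := le_trans (le_max_right _ _) (le_max_right _ _)
  have hYu1 : Y ≤ 2*D + P := by
    apply max_le (by linarith) (max_le (by linarith) (by linarith))
  have hYu2 : Y ≤ Q := by
    apply max_le (by linarith) (max_le (by linarith) (by linarith))
  have hYu3 : Y ≤ 2*(D+E) + R := by
    apply max_le (by linarith) (max_le (by linarith) (by linarith))
  have t1 := term_bound (m - n) (2*D - Y) P hP.le (abs_le.mpr ⟨by linarith, by linarith⟩)
  have t2 := term_bound m Y Q hQ.le (abs_le.mpr ⟨by linarith, by linarith⟩)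
  have t3 := term_bound n (2*(D+E) - Y) R hR.le (abs_le.mpr ⟨by linarith, by linarith⟩)
  push_cast at t1
  have hid : ((m:ℝ)-(n:ℝ))*(2*D-Y) + (m:ℝ)*Y + (n:ℝ)*(2*(D+E)-Y)
      = 2*(m:ℝ)*D + 2*(n:ℝ)*E := by ring
  nlinarith [t1, t2, t3, hid]

lemma ip_expand (a b : ℝ × ℝ) : ip (a+b) (a+b) = ip a a + 2 * ip a b + ip b b := by
  simp [ip]; ring

lemma theta_val (u v : ℝ × ℝ) (j₁ j₂ : ℝ) (x : ℝ × ℝ)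
    (h : ∀ m n : ℤ, 0 ≤ ip ((m:ℝ) • u + (n:ℝ) • v) ((m:ℝ) • u + (n:ℝ) • v)
        + 2 * ip (x + (j₁ / 2) • u + (j₂ / 2) • v) ((m:ℝ) • u + (n:ℝ) • v)) :
    theta u v j₁ j₂ x =
      ip (x + (j₁ / 2) • u + (j₂ / 2) • v) (x + (j₁ / 2) • u + (j₂ / 2) • v) - ip x x := by
  have hlb : ∀ t ∈ {t : ℝ | ∃ p ∈ lat u v,
      t = ip (x + p + (j₁ / 2) • u + (j₂ / 2) • v) (x + p + (j₁ / 2) • u + (j₂ / 2) • v)},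
      ip (x + (j₁ / 2) • u + (j₂ / 2) • v) (x + (j₁ / 2) • u + (j₂ / 2) • v) ≤ t := by
    rintro t ⟨p, hp, rfl⟩
    obtain ⟨m, n, rfl⟩ := hp
    have hre : x + ((m:ℝ) • u + (n:ℝ) • v) + (j₁ / 2) • u + (j₂ / 2) • v
        = (x + (j₁ / 2) • u + (j₂ / 2) • v) + ((m:ℝ) • u + (n:ℝ) • v) := by abel
    rw [hre, ip_expand (x + (j₁ / 2) • u + (j₂ / 2) • v) ((m:ℝ) • u + (n:ℝ) • v)]
    have := h m n
    linarith
  have hmem : ip (x + (j₁ / 2) • u + (j₂ / 2) • v) (x + (j₁ / 2) • u + (j₂ / 2) • v)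
      ∈ {t : ℝ | ∃ p ∈ lat u v,
      t = ip (x + p + (j₁ / 2) • u + (j₂ / 2) • v) (x + p + (j₁ / 2) • u + (j₂ / 2) • v)} := by
    refine ⟨0, ⟨0, 0, by simp⟩, ?_⟩
    have h0 : x + 0 + (j₁ / 2) • u + (j₂ / 2) • v = x + (j₁ / 2) • u + (j₂ / 2) • v := by abel
    rw [h0]
  have hinf : sInf {t : ℝ | ∃ p ∈ lat u v,
      t = ip (x + p + (j₁ / 2) • u + (j₂ / 2) • v) (x + p + (j₁ / 2) • u + (j₂ / 2) • v)}
      = ip (x + (j₁ / 2) • u + (j₂ / 2) • v) (x + (j₁ / 2) • u + (j₂ / 2) • v) :=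
    le_antisymm (csInf_le ⟨_, hlb⟩ hmem) (le_csInf ⟨_, hmem⟩ hlb)
  unfold theta
  rw [hinf]

lemma convex_ip_le' (r : ℝ × ℝ) (c : ℝ) : Convex ℝ {z : ℝ × ℝ | ip z r ≤ c} :=
  convex_halfSpace_le ⟨fun a b => by simp [ip]; ring, fun s a => by simp [ip]; ring⟩ c

lemma convex_ip_ge' (r : ℝ × ℝ) (c : ℝ) : Convex ℝ {z : ℝ × ℝ | c ≤ ip z r} :=
  convex_halfSpace_ge ⟨fun a b => by simp [ip]; ring, fun s a => by simp [ip]; ring⟩ c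

set_option maxHeartbeats 2000000 in
theorem theta_formulas_on_Q1
    (u v w : ℝ × ℝ) (hw : w = -u - v)
    (huv : ip u v < 0) (huw : ip u w < 0) (hvw : ip v w < 0)
    (m₁ : ℝ × ℝ) (hm₁ : ip m₁ w = ip w w / 2 ∧ ip m₁ v = -(ip v v / 2)) :
    ∀ x ∈ convexHull ℝ ({0, (1 / 2 : ℝ) • w, -((1 / 2 : ℝ) • v), m₁} : Set (ℝ × ℝ)),
      theta u v 0 0 x = 0 ∧
      theta u v 0 1 x = ip x v + ip v v / 4 ∧
      theta u v 1 1 x = -ip x w + ip w w / 4 := by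
  obtain ⟨hm1w, hm1v⟩ := hm₁
  subst hw
  intro x hx
  set P : ℝ := -(ip u v) with hPdef
  set Q : ℝ := -(ip u (-u - v)) with hQdef
  set R : ℝ := -(ip v (-u - v)) with hRdef
  have hP : 0 < P := by rw [hPdef]; linarith
  have hQ : 0 < Q := by rw [hQdef]; linarith
  have hR : 0 < R := by rw [hRdef]; linarith
  -- hull subset bounds
  have hsub : ∀ (r : ℝ × ℝ) (c : ℝ), ip 0 r ≤ c → ip ((1/2:ℝ) • (-u - v)) r ≤ c →
      ip (-((1/2:ℝ) • v)) r ≤ c → ip m₁ r ≤ c → ip x r ≤ c := by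
    intro r c h0 h1 h2 h3
    have hss : convexHull ℝ ({0, (1/2:ℝ) • (-u - v), -((1/2:ℝ) • v), m₁} : Set (ℝ × ℝ))
        ⊆ {z : ℝ × ℝ | ip z r ≤ c} := by
      apply convexHull_min _ (convex_ip_le' r c)
      rintro z hz
      simp only [Set.mem_insert_iff, Set.mem_singleton_iff] at hz
      rcases hz with rfl | rfl | rfl | rfl <;> assumption
    exact hss hx
  have hsub2 : ∀ (r : ℝ × ℝ) (c : ℝ), c ≤ ip 0 r → c ≤ ip ((1/2:ℝ) • (-u - v)) r →
      c ≤ ip (-((1/2:ℝ) • v)) r → c ≤ ip m₁ r → c ≤ ip x r := by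
    intro r c h0 h1 h2 h3
    have hss : convexHull ℝ ({0, (1/2:ℝ) • (-u - v), -((1/2:ℝ) • v), m₁} : Set (ℝ × ℝ))
        ⊆ {z : ℝ × ℝ | c ≤ ip z r} := by
      apply convexHull_min _ (convex_ip_ge' r c)
      rintro z hz
      simp only [Set.mem_insert_iff, Set.mem_singleton_iff] at hz
      rcases hz with rfl | rfl | rfl | rfl <;> assumption
    exact hss hx
  -- vertex inner-product values
  have e0 : ∀ r : ℝ × ℝ, ip 0 r = 0 := by intro r; simp [ip]
  have e1u : ip ((1/2:ℝ) • (-u - v)) u = -Q/2 := by rw [hQdef]; simp [ip]; ring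
  have e1v : ip ((1/2:ℝ) • (-u - v)) v = -R/2 := by rw [hRdef]; simp [ip]; ring
  have e1w : ip ((1/2:ℝ) • (-u - v)) (-u - v) = (Q+R)/2 := by
    rw [hQdef, hRdef]; simp [ip]; ring
  have e2u : ip (-((1/2:ℝ) • v)) u = P/2 := by rw [hPdef]; simp [ip]; ring
  have e2v : ip (-((1/2:ℝ) • v)) v = -(P+R)/2 := by rw [hPdef, hRdef]; simp [ip]; ring
  have e2w : ip (-((1/2:ℝ) • v)) (-u - v) = R/2 := by rw [hRdef]; simp [ip]; ring
  have hvv : ip v v = P + R := by rw [hPdef, hRdef]; simp [ip]; ring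
  have hww : ip (-u - v) (-u - v) = Q + R := by rw [hQdef, hRdef]; simp [ip]; ring
  have e3w : ip m₁ (-u - v) = (Q+R)/2 := by rw [hm1w, hww]
  have e3v : ip m₁ v = -(P+R)/2 := by rw [hm1v, hvv]; ring
  have e3u : ip m₁ u = (P-Q)/2 := by
    have hlin : ip m₁ u = -(ip m₁ (-u - v)) - ip m₁ v := by simp [ip]; ring
    rw [hlin, e3w, e3v]; ring
  -- the six bounds on x
  have b1 : -(Q/2) ≤ ip x u := by
    apply hsub2 u <;> simp only [e0, e1u, e2u, e3u] <;> linarith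
  have b2 : ip x u ≤ P/2 := by
    apply hsub u <;> simp only [e0, e1u, e2u, e3u] <;> linarith
  have b3 : -((P+R)/2) ≤ ip x v := by
    apply hsub2 v <;> simp only [e0, e1v, e2v, e3v] <;> linarith
  have b4 : ip x v ≤ 0 := by
    apply hsub v <;> simp only [e0, e1v, e2v, e3v] <;> linarith
  have b5 : (0:ℝ) ≤ ip x (-u - v) := by
    apply hsub2 (-u - v) <;> simp only [e0, e1w, e2w, e3w] <;> linarith
  have b6 : ip x (-u - v) ≤ (Q+R)/2 := by
    apply hsub (-u - v) <;> simp only [e0, e1w, e2w, e3w] <;> linarith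
  have hxw : ip x (-u - v) = -(ip x u + ip x v) := by simp [ip]; ring
  -- generic identity turning lattice quadratic into P,Q,R form
  have hiden : ∀ (y : ℝ × ℝ) (m n : ℤ),
      ip ((m:ℝ) • u + (n:ℝ) • v) ((m:ℝ) • u + (n:ℝ) • v) + 2 * ip y ((m:ℝ) • u + (n:ℝ) • v)
      = P*((m:ℝ)-(n:ℝ))^2 + Q*(m:ℝ)^2 + R*(n:ℝ)^2 + 2*(m:ℝ)*(ip y u) + 2*(n:ℝ)*(ip y v) := by
    intro y m n
    rw [hPdef, hQdef, hRdef]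
    simp [ip]; ring
  have hkey : ∀ y : ℝ × ℝ, |2 * ip y u| ≤ P + Q → |2 * ip y v| ≤ P + R →
      |2 * (ip y u + ip y v)| ≤ Q + R →
      ∀ m n : ℤ, 0 ≤ ip ((m:ℝ) • u + (n:ℝ) • v) ((m:ℝ) • u + (n:ℝ) • v)
        + 2 * ip y ((m:ℝ) • u + (n:ℝ) • v) := by
    intro y h1 h2 h3 m n
    rw [hiden y m n]
    exact voronoi_key P Q R (ip y u) (ip y v) hP hQ hR h1 h2 h3 m n
  refine ⟨?_, ?_, ?_⟩
  · -- theta 0 0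
    have hy0u : ip (x + ((0:ℝ) / 2) • u + ((0:ℝ) / 2) • v) u = ip x u := by simp [ip]
    have hy0v : ip (x + ((0:ℝ) / 2) • u + ((0:ℝ) / 2) • v) v = ip x v := by simp [ip]
    have h := theta_val u v 0 0 x (by
      apply hkey
      · rw [hy0u]; rw [abs_le]; constructor <;> linarith
      · rw [hy0v]; rw [abs_le]; constructor <;> linarith
      · rw [hy0u, hy0v]; rw [abs_le]; constructor <;> linarith [hxw])
    rw [h]
    simp [ip]
    try ring
  · -- theta 0 1
    have hy1u : ip (x + ((0:ℝ) / 2) • u + ((1:ℝ) / 2) • v) u = ip x u - P/2 := by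
      rw [hPdef]; simp [ip]; ring
    have hy1v : ip (x + ((0:ℝ) / 2) • u + ((1:ℝ) / 2) • v) v = ip x v + (P+R)/2 := by
      rw [hPdef, hRdef]; simp [ip]; ring
    have h := theta_val u v 0 1 x (by
      apply hkey
      · rw [hy1u]; rw [abs_le]; constructor <;> linarith
      · rw [hy1v]; rw [abs_le]; constructor <;> linarith
      · rw [hy1u, hy1v]; rw [abs_le]; constructor <;> linarith [hxw])
    rw [h]
    simp [ip]
    try ring
  · -- theta 1 1
    have hy2u : ip (x + ((1:ℝ) / 2) • u + ((1:ℝ) / 2) • v) u = ip x u + Q/2 := by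
      rw [hQdef]; simp [ip]; ring
    have hy2v : ip (x + ((1:ℝ) / 2) • u + ((1:ℝ) / 2) • v) v = ip x v + R/2 := by
      rw [hRdef]; simp [ip]; ring
    have h := theta_val u v 1 1 x (by
      apply hkey
      · rw [hy2u]; rw [abs_le]; constructor <;> linarith
      · rw [hy2v]; rw [abs_le]; constructor <;> linarith
      · rw [hy2u, hy2v]; rw [abs_le]; constructor <;> linarith [hxw])
    rw [h]
    simp [ip]
    try ring


end
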